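/- Let κ > 0, c ∈ (0,1), λ ∈ (0, π²/(4c²κ)), a ∈ [0, 1−c], set b = a + c, and assume √κ·tanh(√λ·a)·tan(√(λκ)·c) − 1 ≠ 0. Then A(a) = 0 if and only if tanh(√λ·(1−b)) = ( κ^{−1/2}·tan(√(λκ)·c) + tanh(√λ·a) ) / ( √κ·tanh(√λ·a)·tan(√(λκ)·c) − 1 ). -/

import Mathlib

/-- The coefficient `A(a)` of `β₀` in `∂_{β₁} f`. -/
noncomputable def A (c κ lam a : ℝ) : ℝ :=
  -2 * Real.sqrt κ * Real.cos (c * Real.sqrt (κ * lam)) * Real.sinh (Real.sqrt lam * (1 - c))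
  + (κ - 1) * Real.sin (c * Real.sqrt (κ * lam)) * Real.cosh (Real.sqrt lam * (1 - c))
  - (κ + 1) * Real.sin (c * Real.sqrt (κ * lam)) * Real.cosh (Real.sqrt lam * (2 * a + c - 1))

theorem stmt2 (κ c lam a b : ℝ) (hκ : 0 < κ) (hc : c ∈ Set.Ioo (0:ℝ) 1)
    (hlam : lam ∈ Set.Ioo 0 (Real.pi ^ 2 / (4 * c ^ 2 * κ)))
    (ha : a ∈ Set.Icc 0 (1 - c)) (hb : b = a + c)
    (hden : Real.sqrt κ * Real.tanh (Real.sqrt lam * a) * Real.tan (Real.sqrt (lam * κ) * c) - 1 ≠ 0) :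
    A c κ lam a = 0 ↔
      Real.tanh (Real.sqrt lam * (1 - b)) =
        ((Real.sqrt κ)⁻¹ * Real.tan (Real.sqrt (lam * κ) * c) + Real.tanh (Real.sqrt lam * a)) /
          (Real.sqrt κ * Real.tanh (Real.sqrt lam * a) * Real.tan (Real.sqrt (lam * κ) * c) - 1) := by
  subst hb
  have hc0 := hc.1
  set s := Real.sqrt lam with hs
  set k := Real.sqrt κ with hk
  have hk0 : 0 < k := Real.sqrt_pos.mpr hκ
  have hs0 : 0 < s := Real.sqrt_pos.mpr hlam.1
  have hkk : k * k = κ := Real.mul_self_sqrt hκ.le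
  set θ := Real.sqrt (lam * κ) * c with hθ
  have harg : c * Real.sqrt (κ * lam) = θ := by
    rw [hθ, mul_comm κ lam, mul_comm]
  have hθ0 : 0 ≤ θ := mul_nonneg (Real.sqrt_nonneg _) hc.1.le
  have hθsq : θ ^ 2 = lam * κ * c ^ 2 := by
    rw [hθ, mul_pow, Real.sq_sqrt (mul_nonneg hlam.1.le hκ.le)]
  have hθlt : θ < Real.pi / 2 := by
    have h2 := hlam.2
    have hcκ : 0 < 4 * c ^ 2 * κ := by positivity
    rw [lt_div_iff₀ hcκ] at h2
    nlinarith [Real.pi_pos, sq_nonneg (θ - Real.pi / 2)]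
  have hcos : 0 < Real.cos θ := Real.cos_pos_of_mem_Ioo
    ⟨by linarith [Real.pi_pos], hθlt⟩
  set u := s * a with hu
  set v := s * (1 - (a + c)) with hv
  have hcu : 0 < Real.cosh u := Real.cosh_pos u
  have hcv : 0 < Real.cosh v := Real.cosh_pos v
  have e1 : s * (1 - c) = u + v := by rw [hu, hv]; ring
  have e2 : s * (2 * a + c - 1) = u - v := by rw [hu, hv]; ring
  have hA : A c κ lam a = 2 * k * Real.cos θ * Real.cosh u * Real.cosh v *
      (Real.tanh v * (k * Real.tanh u * Real.tan θ - 1)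
        - (k⁻¹ * Real.tan θ + Real.tanh u)) := by
    rw [A, harg, e1, e2, Real.sinh_add, Real.cosh_add, Real.cosh_sub,
      Real.tanh_eq_sinh_div_cosh, Real.tanh_eq_sinh_div_cosh,
      Real.tan_eq_sin_div_cos, ← hkk]
    have hcosne := hcos.ne'
    field_simp
    rw [Real.sqrt_sq hk0.le]
    ring
  rw [hA]
  constructor
  · intro h
    have hne : (2 : ℝ) * k * Real.cos θ * Real.cosh u * Real.cosh v ≠ 0 := by positivity
    have h2 : Real.tanh v * (k * Real.tanh u * Real.tan θ - 1)
        - (k⁻¹ * Real.tan θ + Real.tanh u) = 0 := by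
      rcases mul_eq_zero.mp h with h' | h'
      · exact absurd h' hne
      · exact h'
    rw [sub_eq_zero] at h2
    rw [eq_div_iff hden]
    linarith [h2]
  · intro h
    rw [eq_div_iff hden] at h
    have : Real.tanh v * (k * Real.tanh u * Real.tan θ - 1)
        - (k⁻¹ * Real.tan θ + Real.tanh u) = 0 := by linarith [h]
    rw [this, mul_zero]
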